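/- arXiv:1006.3461 — 7 statements merged into one kernel-verified Lean document; each statement's English description precedes it below -/
import Mathlib

section
/- Let V be a complex Banach space and let W, W' : V × V → ℂ be bounded bilinear forms. Then for every even natural number n ≥ 2 and all vectors v₁, …, vₙ ∈ V, the quasi-free n-point functions satisfy |ω_W(v₁,…,vₙ) − ω_{W'}(v₁,…,vₙ)| ≤ ‖v₁‖⋯‖vₙ‖ · ‖W − W'‖ · |Π₂(n)| · ∑_{k=1}^{n/2} ‖W‖^{k−1} ‖W'‖^{n/2−k}. -/
open scoped BigOperators

/-- The set of pair partitions `Π₂(n)` of `{1,…,n}`, encoded as the fixed-point-free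
involutions of `Fin n` (each such involution `σ` corresponds bijectively to the pair
partition whose blocks are the pairs `{i, σ i}`). -/
noncomputable def pairings (n : ℕ) : Finset (Equiv.Perm (Fin n)) :=
  Finset.univ.filter (fun σ => σ * σ = 1 ∧ ∀ i, σ i ≠ i)

/-- The quasi-free `n`-point function `ω_W(v₁,…,vₙ) = ∑_{P ∈ Π₂(n)} ∏_{(i,j)∈P, i<j} W(v_i,v_j)`
associated with a bounded bilinear form `W`. -/
noncomputable def qfFun {V : Type*} [NormedAddCommGroup V] [NormedSpace ℂ V]
    (W : V →L[ℂ] V →L[ℂ] ℂ) (n : ℕ) (v : Fin n → V) : ℂ :=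
  ∑ σ ∈ pairings n, ∏ i ∈ Finset.univ.filter (fun i : Fin n => i < σ i), W (v i) (v (σ i))

/-!
Each term of `ω_W - ω_{W'}` is a difference of two products of `n/2` factors, one factor
`W(v_i, v_{σ i})` per block. Telescoping `∏ a - ∏ b = ∑_k a_1⋯a_{k-1} (a_k - b_k) b_{k+1}⋯b_m`
and bounding each factor by `‖W‖`, `‖W'‖` or `‖W - W'‖` times `‖v_i‖ ‖v_{σ i}‖` bounds every
term by `‖v₁‖⋯‖vₙ‖ ‖W - W'‖ ∑_k ‖W‖^{k-1} ‖W'‖^{n/2-k}`, since the blocks of a pairing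
cover each index exactly once. Summing over the `|Π₂(n)|` pairings gives the claim.
-/

open Finset

theorem Finset.norm_prod_sub_prod_le {ι R : Type*} [NormedCommRing R] [NormOneClass R]
    (s : Finset ι) (f g : ι → R) (c : ι → ℝ) {C C' D : ℝ}
    (hf : ∀ i ∈ s, ‖f i‖ ≤ C * c i) (hg : ∀ i ∈ s, ‖g i‖ ≤ C' * c i)
    (hfg : ∀ i ∈ s, ‖f i - g i‖ ≤ D * c i) :
    ‖∏ i ∈ s, f i - ∏ i ∈ s, g i‖ ≤
      (∏ i ∈ s, c i) * D * ∑ k ∈ range #s, C ^ k * C' ^ (#s - 1 - k) := by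
  classical
  induction s using Finset.induction_on with
  | empty => simp
  | @insert a s ha ih =>
    simp only [forall_mem_insert] at hf hg hfg
    have hprod_f : ‖∏ i ∈ s, f i‖ ≤ C ^ #s * ∏ i ∈ s, c i := calc
      ‖∏ i ∈ s, f i‖ ≤ ∏ i ∈ s, ‖f i‖ := s.norm_prod_le f
      _ ≤ ∏ i ∈ s, C * c i := prod_le_prod (fun _ _ => norm_nonneg _) hf.2
      _ = C ^ #s * ∏ i ∈ s, c i := by rw [prod_mul_distrib, prod_const]
    rw [prod_insert ha, prod_insert ha, prod_insert ha, card_insert_of_notMem ha,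
      Nat.add_sub_cancel, geom_sum₂_succ_eq]
    calc ‖f a * ∏ i ∈ s, f i - g a * ∏ i ∈ s, g i‖
        = ‖(f a - g a) * ∏ i ∈ s, f i + g a * (∏ i ∈ s, f i - ∏ i ∈ s, g i)‖ := by
          congr 1; ring
      _ ≤ ‖f a - g a‖ * ‖∏ i ∈ s, f i‖ + ‖g a‖ * ‖∏ i ∈ s, f i - ∏ i ∈ s, g i‖ :=
        (norm_add_le _ _).trans (add_le_add (norm_mul_le _ _) (norm_mul_le _ _))
      _ ≤ D * c a * (C ^ #s * ∏ i ∈ s, c i) +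
          C' * c a * ((∏ i ∈ s, c i) * D * ∑ k ∈ range #s, C ^ k * C' ^ (#s - 1 - k)) :=
        add_le_add
          (mul_le_mul hfg.1 hprod_f (norm_nonneg _) ((norm_nonneg _).trans hfg.1))
          (mul_le_mul hg.1 (ih hf.2 hg.2 hfg.2) (norm_nonneg _) ((norm_nonneg _).trans hg.1))
      _ = _ := by ring

theorem Finset.sum_Icc_one_pow_mul_pow_eq_sum_range {R : Type*} [CommSemiring R] (x y : R)
    (m : ℕ) :
    ∑ k ∈ Icc 1 m, x ^ (k - 1) * y ^ (m - k) = ∑ k ∈ range m, x ^ k * y ^ (m - 1 - k) := by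
  rw [← Ico_add_one_right_eq_Icc, range_eq_Ico, ← zero_add 1, ← sum_Ico_add']
  refine sum_congr rfl fun k _ => ?_
  rw [Nat.add_sub_cancel, Nat.sub_sub, Nat.add_comm 1 k]

section FixedPointFreeInvolution

variable {α : Type*} [LinearOrder α] [Fintype α] {σ : Equiv.Perm α}

theorem image_filter_lt_apply_eq (hσ : Function.Involutive σ) (hfix : ∀ i, σ i ≠ i) :
    (univ.filter (fun i => i < σ i)).image σ = univ.filter (fun i => ¬ i < σ i) := by
  ext j
  simp only [mem_image, mem_filter, mem_univ, true_and]
  constructor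
  · rintro ⟨i, hi, rfl⟩
    rw [hσ i]
    exact hi.not_gt
  · intro hj
    exact ⟨σ j, by rw [hσ j]; exact lt_of_le_of_ne (not_lt.1 hj) (hfix j), hσ j⟩

theorem prod_filter_lt_apply_mul {M : Type*} [CommMonoid M]
    (hσ : Function.Involutive σ) (hfix : ∀ i, σ i ≠ i) (f : α → M) :
    ∏ i ∈ univ.filter (fun i => i < σ i), f i * f (σ i) = ∏ i, f i := by
  rw [prod_mul_distrib, ← prod_image (f := f) σ.injective.injOn,
    image_filter_lt_apply_eq hσ hfix, prod_filter_mul_prod_filter_not]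

theorem card_filter_lt_apply (hσ : Function.Involutive σ) (hfix : ∀ i, σ i ≠ i) :
    #(univ.filter (fun i => i < σ i)) = Fintype.card α / 2 := by
  have hcard := card_filter_add_card_filter_not (s := univ) (fun i => i < σ i)
  rw [← image_filter_lt_apply_eq hσ hfix, card_image_of_injective _ σ.injective,
    card_univ] at hcard
  omega

end FixedPointFreeInvolution

theorem involutive_of_mem_pairings {n : ℕ} {σ : Equiv.Perm (Fin n)} (hσ : σ ∈ pairings n) :
    Function.Involutive σ :=
  fun i => congr($((mem_filter.1 hσ).2.1) i)

theorem norm_prod_pairs_sub_prod_pairs_le {V : Type*} [NormedAddCommGroup V]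
    [NormedSpace ℂ V] (W W' : V →L[ℂ] V →L[ℂ] ℂ) {n : ℕ} {σ : Equiv.Perm (Fin n)}
    (hσ : σ ∈ pairings n) (v : Fin n → V) :
    ‖∏ i ∈ univ.filter (fun i : Fin n => i < σ i), W (v i) (v (σ i)) -
        ∏ i ∈ univ.filter (fun i : Fin n => i < σ i), W' (v i) (v (σ i))‖ ≤
      (∏ i, ‖v i‖) * ‖W - W'‖ *
        ∑ k ∈ range (n / 2), ‖W‖ ^ k * ‖W'‖ ^ (n / 2 - 1 - k) := by
  have hinv := involutive_of_mem_pairings hσ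
  have hfix := (mem_filter.1 hσ).2.2
  have hbound (B : V →L[ℂ] V →L[ℂ] ℂ) (i : Fin n) :
      ‖B (v i) (v (σ i))‖ ≤ ‖B‖ * (‖v i‖ * ‖v (σ i)‖) :=
    (B.le_opNorm₂ _ _).trans_eq (mul_assoc _ _ _)
  have key := norm_prod_sub_prod_le (univ.filter (fun i : Fin n => i < σ i))
    (fun i => W (v i) (v (σ i))) (fun i => W' (v i) (v (σ i))) (fun i => ‖v i‖ * ‖v (σ i)‖)
    (fun i _ => hbound W i) (fun i _ => hbound W' i)
    (fun i _ => by simpa only [sub_apply] using hbound (W - W') i)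
  rwa [prod_filter_lt_apply_mul hinv hfix, card_filter_lt_apply hinv hfix,
    Fintype.card_fin] at key

theorem stmt0_general {V : Type*} [NormedAddCommGroup V] [NormedSpace ℂ V]
    (W W' : V →L[ℂ] V →L[ℂ] ℂ) (n : ℕ) (v : Fin n → V) :
    ‖qfFun W n v - qfFun W' n v‖ ≤
      (∏ i, ‖v i‖) * ‖W - W'‖ * ((pairings n).card : ℝ) *
        ∑ k ∈ Finset.Icc 1 (n / 2), ‖W‖ ^ (k - 1) * ‖W'‖ ^ (n / 2 - k) := by
  rw [qfFun, qfFun, ← sum_sub_distrib, sum_Icc_one_pow_mul_pow_eq_sum_range,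
    mul_right_comm _ _ (_ : ℝ), mul_comm _ (_ : ℝ), ← nsmul_eq_mul]
  exact (norm_sum_le _ _).trans <| sum_le_card_nsmul _ _ _ fun σ hσ =>
    norm_prod_pairs_sub_prod_pairs_le W W' hσ v

theorem stmt0 {V : Type*} [NormedAddCommGroup V] [NormedSpace ℂ V] [CompleteSpace V]
    (W W' : V →L[ℂ] V →L[ℂ] ℂ) (n : ℕ) (hn : 2 ≤ n) (hev : Even n) (v : Fin n → V) :
    ‖qfFun W n v - qfFun W' n v‖ ≤
      (∏ i, ‖v i‖) * ‖W - W'‖ * ((pairings n).card : ℝ) *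
        ∑ k ∈ Finset.Icc 1 (n / 2), ‖W‖ ^ (k - 1) * ‖W'‖ ^ (n / 2 - k) :=
  stmt0_general W W' n v
end

section
/- Let Λ be a set with a symmetric nonnegative distance function d, and let Y ⊆ Λ be a finite subset with |Y| ≥ 4. If for some r > 0 the spread satisfies Δ(Y) ≤ r while the 2-spread satisfies Δ₂(Y) > r, then there exist two distinct points x, y ∈ Y with d(x,y) ≤ r such that the set Z := Y ∖ {x,y} satisfies Δ(Z) ≤ r. -/
open scoped BigOperators

/-- The distance `d(S,T) = min_{s∈S,t∈T} d(s,t)` between two (nonempty, finite) subsets,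
realized as an infimum. -/
noncomputable def setDist {Λ : Type*} (d : Λ → Λ → ℝ) (S T : Finset Λ) : ℝ :=
  sInf {r : ℝ | ∃ s ∈ S, ∃ t ∈ T, r = d s t}

/-- The spread `Δ(Y) = max_{y∈Y} d(y, Y∖{y})`, realized as a supremum. -/
noncomputable def spread {Λ : Type*} [DecidableEq Λ] (d : Λ → Λ → ℝ) (Y : Finset Λ) : ℝ :=
  sSup {r : ℝ | ∃ y ∈ Y, r = setDist d {y} (Y.erase y)}

/-- The 2-spread `Δ₂(Y) = max_{J ⊆ Y, |J| = 2} d(J, Y∖J)`. -/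
noncomputable def spread2 {Λ : Type*} [DecidableEq Λ] (d : Λ → Λ → ℝ) (Y : Finset Λ) : ℝ :=
  sSup {r : ℝ | ∃ J : Finset Λ, J ⊆ Y ∧ J.card = 2 ∧ r = setDist d J (Y \ J)}

/-- `N(X,n,r)`: the number of `n`-element subsets `Y ⊆ X` with `Δ(Y) ≤ r`. -/
noncomputable def countSpread {Λ : Type*} [DecidableEq Λ] (d : Λ → Λ → ℝ)
    (X : Finset Λ) (n : ℕ) (r : ℝ) : ℕ :=
  {Y : Finset Λ | Y ⊆ X ∧ Y.card = n ∧ spread d Y ≤ r}.ncard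

/-- The sequence `q₂ = 1`, `q₃ = 2`, `q_{n+2} = (n+1)·q_{n+1} + q_n` (for `n ≥ 2`). -/
def qseq : ℕ → ℕ
  | 0 => 0
  | 1 => 0
  | 2 => 1
  | 3 => 2
  | (n + 4) => (n + 3) * qseq (n + 3) + qseq (n + 2)

/-!
Choose a pair `J = {x, y} ⊆ Y` realising `Δ₂(Y) > r`: every point of `J` is then more than `r`
away from every point of `Y ∖ J`. Since `Δ(Y) ≤ r`, every point of `Y` has a neighbour in `Y`
within distance `r`. For `x` that neighbour cannot lie outside `J`, so it is `y`; for
`z ∈ Y ∖ J` it cannot lie in `J`, so `Y ∖ J` still has spread at most `r`.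
-/

section setDist

variable {Λ : Type*} {d : Λ → Λ → ℝ}

theorem finite_setOf_dist (S T : Finset Λ) : {r : ℝ | ∃ s ∈ S, ∃ t ∈ T, r = d s t}.Finite :=
  ((S ×ˢ T).finite_toSet.image fun p => d p.1 p.2).subset
    fun _ ⟨s, hs, t, ht, h⟩ => ⟨(s, t), Finset.mem_product.2 ⟨hs, ht⟩, h.symm⟩

theorem setDist_le {S T : Finset Λ} {s t : Λ} (hs : s ∈ S) (ht : t ∈ T) :
    setDist d S T ≤ d s t :=
  csInf_le (finite_setOf_dist S T).bddBelow ⟨s, hs, t, ht, rfl⟩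

theorem exists_setDist_eq {S T : Finset Λ} (hS : S.Nonempty) (hT : T.Nonempty) :
    ∃ s ∈ S, ∃ t ∈ T, setDist d S T = d s t :=
  let ⟨s, hs⟩ := hS
  let ⟨t, ht⟩ := hT
  Set.Nonempty.csInf_mem (s := {r | ∃ s ∈ S, ∃ t ∈ T, r = d s t}) ⟨d s t, s, hs, t, ht, rfl⟩
    (finite_setOf_dist S T)

end setDist

section spread

variable {Λ : Type*} [DecidableEq Λ] {d : Λ → Λ → ℝ} {Y J : Finset Λ} {r : ℝ}

theorem setDist_le_spread {y : Λ} (hy : y ∈ Y) : setDist d {y} (Y.erase y) ≤ spread d Y :=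
  le_csSup (Set.Finite.bddAbove <| (Y.finite_toSet.image fun y => setDist d {y} (Y.erase y)).subset
    fun _ ⟨y, hy, h⟩ => ⟨y, hy, h.symm⟩) ⟨y, hy, rfl⟩

theorem exists_dist_le_of_spread_le (h : spread d Y ≤ r) {y : Λ} (hy : y ∈ Y)
    (hne : (Y.erase y).Nonempty) : ∃ w ∈ Y.erase y, d y w ≤ r := by
  obtain ⟨s, hs, w, hw, hdist⟩ := exists_setDist_eq (d := d) (Finset.singleton_nonempty y) hne
  rw [Finset.mem_singleton] at hs
  subst hs
  exact ⟨w, hw, hdist ▸ (setDist_le_spread hy).trans h⟩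

theorem spread_le_of_forall_exists_dist_le (hY : Y.Nonempty)
    (h : ∀ y ∈ Y, ∃ w ∈ Y.erase y, d y w ≤ r) : spread d Y ≤ r := by
  obtain ⟨y, hy⟩ := hY
  refine csSup_le ⟨_, y, hy, rfl⟩ ?_
  rintro _ ⟨z, hz, rfl⟩
  obtain ⟨w, hw, hzw⟩ := h z hz
  exact (setDist_le (Finset.mem_singleton_self z) hw).trans hzw

theorem exists_lt_setDist_of_lt_spread2 (hY : 2 ≤ Y.card) (h : r < spread2 d Y) :
    ∃ J ⊆ Y, J.card = 2 ∧ r < setDist d J (Y \ J) := by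
  obtain ⟨J₀, hJ₀Y, hJ₀⟩ := Finset.exists_subset_card_eq hY
  have hfin : {s : ℝ | ∃ J : Finset Λ, J ⊆ Y ∧ J.card = 2 ∧ s = setDist d J (Y \ J)}.Finite :=
    (Y.powerset.finite_toSet.image fun J => setDist d J (Y \ J)).subset
      fun _ ⟨J, hJY, _, h⟩ => ⟨J, Finset.mem_powerset.2 hJY, h.symm⟩
  obtain ⟨J, hJY, hJ, hmax⟩ := Set.Nonempty.csSup_mem (by exact ⟨_, J₀, hJ₀Y, hJ₀, rfl⟩) hfin
  exact ⟨J, hJY, hJ, hmax ▸ h⟩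

theorem exists_mem_dist_le_of_lt_setDist (h : spread d Y ≤ r) (hJ : r < setDist d J (Y \ J))
    {x : Λ} (hx : x ∈ J) (hJY : J ⊆ Y) (hne : (Y.erase x).Nonempty) :
    ∃ w ∈ J.erase x, d x w ≤ r := by
  obtain ⟨w, hw, hxw⟩ := exists_dist_le_of_spread_le h (hJY hx) hne
  obtain ⟨hwx, hwY⟩ := Finset.mem_erase.1 hw
  have hwJ : w ∈ J := by
    by_contra hwJ
    exact (hJ.trans_le (setDist_le hx (Finset.mem_sdiff.2 ⟨hwY, hwJ⟩))).not_ge hxw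
  exact ⟨w, Finset.mem_erase.2 ⟨hwx, hwJ⟩, hxw⟩

theorem spread_sdiff_le_of_lt_setDist (hsym : ∀ x y, d x y = d y x) (h : spread d Y ≤ r)
    (hJ : r < setDist d J (Y \ J)) (hJY : J ⊆ Y) (hJne : J.Nonempty) (hZ : (Y \ J).Nonempty) :
    spread d (Y \ J) ≤ r := by
  obtain ⟨x, hx⟩ := hJne
  refine spread_le_of_forall_exists_dist_le hZ fun z hz => ?_
  obtain ⟨hzY, hzJ⟩ := Finset.mem_sdiff.1 hz
  have hxz : x ≠ z := fun hxz => hzJ (hxz ▸ hx)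
  obtain ⟨w, hw, hzw⟩ := exists_dist_le_of_spread_le h hzY ⟨x, Finset.mem_erase.2 ⟨hxz, hJY hx⟩⟩
  obtain ⟨hwz, hwY⟩ := Finset.mem_erase.1 hw
  have hwJ : w ∉ J := fun hwJ =>
    (hJ.trans_le (setDist_le hwJ hz)).not_ge (hsym w z ▸ hzw)
  exact ⟨w, Finset.mem_erase.2 ⟨hwz, Finset.mem_sdiff.2 ⟨hwY, hwJ⟩⟩, hzw⟩

end spread

theorem stmt2_general {Λ : Type*} [DecidableEq Λ] (d : Λ → Λ → ℝ)
    (hsym : ∀ x y, d x y = d y x)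
    (Y : Finset Λ) (hY : 4 ≤ Y.card) (r : ℝ)
    (h1 : spread d Y ≤ r) (h2 : r < spread2 d Y) :
    ∃ x ∈ Y, ∃ y ∈ Y, x ≠ y ∧ d x y ≤ r ∧ spread d (Y \ {x, y}) ≤ r := by
  obtain ⟨J, hJY, hJcard, hJ⟩ := exists_lt_setDist_of_lt_spread2 (by omega) h2
  obtain ⟨x, y, hxy, rfl⟩ := Finset.card_eq_two.1 hJcard
  have hxY : x ∈ Y := hJY (Finset.mem_insert_self x {y})
  have hyY : y ∈ Y := hJY (Finset.mem_insert_of_mem (Finset.mem_singleton_self y))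
  obtain ⟨w, hw, hxw⟩ := exists_mem_dist_le_of_lt_setDist h1 hJ (Finset.mem_insert_self x {y})
    hJY ⟨y, Finset.mem_erase.2 ⟨hxy.symm, hyY⟩⟩
  obtain ⟨hwx, hwJ⟩ := Finset.mem_erase.1 hw
  have hwy : w = y := Finset.mem_singleton.1 ((Finset.mem_insert.1 hwJ).resolve_left hwx)
  have hZ : (Y \ {x, y}).Nonempty := by
    rw [← Finset.card_pos, Finset.card_sdiff_of_subset hJY, hJcard]
    omega
  exact ⟨x, hxY, y, hyY, hxy, hwy ▸ hxw,
    spread_sdiff_le_of_lt_setDist hsym h1 hJ hJY (Finset.insert_nonempty x {y}) hZ⟩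

theorem stmt2 {Λ : Type*} [DecidableEq Λ] (d : Λ → Λ → ℝ)
    (hsym : ∀ x y, d x y = d y x) (hnonneg : ∀ x y, 0 ≤ d x y)
    (Y : Finset Λ) (hY : 4 ≤ Y.card) (r : ℝ) (hr : 0 < r)
    (h1 : spread d Y ≤ r) (h2 : r < spread2 d Y) :
    ∃ x ∈ Y, ∃ y ∈ Y, x ≠ y ∧ d x y ≤ r ∧ spread d (Y \ {x, y}) ≤ r :=
  stmt2_general d hsym Y hY r h1 h2
end

section
/- Let Λ be a set with a symmetric nonnegative distance function d, and let Y ⊆ Λ be a finite subset with |Y| ≥ 3. If for some r > 0 both Δ(Y) ≤ r and Δ₂(Y) ≤ r hold, then there exists a point x ∈ Y such that the set Z := Y ∖ {x} satisfies Δ(Z) ≤ r. -/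
open scoped BigOperators

/-! Suppose no point can be removed. Then every `x ∈ Y` has a "pendant" `p x ∈ Y`: a point whose
only `r`-neighbour in `Y` is `x` (it loses all neighbours when `x` is removed, while `Δ(Y) ≤ r`
says it had one). A point is the pendant of at most one `x`, so `p` permutes `Y`. Then for any
`a`, the pair `{a, p a}` is at distance `> r` from the rest of `Y`: `p a` sees only `a`, and a
point `t = p c` near `a` forces `c = a`, i.e. `t = p a`. This contradicts `Δ₂(Y) ≤ r`. -/

section

variable {Λ : Type*} (d : Λ → Λ → ℝ)

lemma finite_setDist_values (S T : Finset Λ) :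
    {x : ℝ | ∃ s ∈ S, ∃ t ∈ T, x = d s t}.Finite :=
  (((S : Set Λ) ×ˢ (T : Set Λ)).toFinite.image fun p => d p.1 p.2).subset <| by
    rintro _ ⟨s, hs, t, ht, rfl⟩
    exact ⟨(s, t), ⟨hs, ht⟩, rfl⟩

lemma setDist_le_iff {S T : Finset Λ} (hS : S.Nonempty) (hT : T.Nonempty) {r : ℝ} :
    setDist d S T ≤ r ↔ ∃ s ∈ S, ∃ t ∈ T, d s t ≤ r := by
  constructor
  · have hne : {x : ℝ | ∃ s ∈ S, ∃ t ∈ T, x = d s t}.Nonempty :=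
      ⟨_, hS.choose, hS.choose_spec, hT.choose, hT.choose_spec, rfl⟩
    obtain ⟨s, hs, t, ht, hst⟩ := hne.csInf_mem (finite_setDist_values d S T)
    exact fun h => ⟨s, hs, t, ht, hst ▸ h⟩
  · rintro ⟨s, hs, t, ht, hst⟩
    exact (csInf_le (finite_setDist_values d S T).bddBelow ⟨s, hs, t, ht, rfl⟩).trans hst

variable [DecidableEq Λ]

lemma spread_le_iff {Y : Finset Λ} (hY : Y.Nontrivial) {r : ℝ} :
    spread d Y ≤ r ↔ ∀ y ∈ Y, ∃ z ∈ Y.erase y, d y z ≤ r := by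
  have hfin : {x : ℝ | ∃ y ∈ Y, x = setDist d {y} (Y.erase y)}.Finite :=
    (Y.finite_toSet.image fun y => setDist d {y} (Y.erase y)).subset <| by
      rintro _ ⟨y, hy, rfl⟩
      exact ⟨y, hy, rfl⟩
  obtain ⟨y₀, hy₀⟩ := hY.nonempty
  rw [spread, csSup_le_iff hfin.bddAbove ⟨_, y₀, hy₀, rfl⟩]
  refine ⟨fun h y hy => ?_, ?_⟩
  · simpa using (setDist_le_iff d (Finset.singleton_nonempty y) hY.erase_nonempty).1
      (h _ ⟨y, hy, rfl⟩)
  · rintro h _ ⟨y, hy, rfl⟩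
    exact (setDist_le_iff d (Finset.singleton_nonempty y) hY.erase_nonempty).2
      ⟨y, Finset.mem_singleton_self y, h y hy⟩

lemma setDist_le_spread2 {Y J : Finset Λ} (hJY : J ⊆ Y) (hJ : J.card = 2) :
    setDist d J (Y \ J) ≤ spread2 d Y := by
  refine le_csSup (Set.Finite.bddAbove ?_) ⟨J, hJY, hJ, rfl⟩
  refine (Y.powerset.finite_toSet.image fun J => setDist d J (Y \ J)).subset ?_
  rintro _ ⟨J, hJY, -, rfl⟩
  exact ⟨J, Finset.mem_powerset.2 hJY, rfl⟩

/-- `x` is the sole `r`-neighbour of `y` in `Y`. -/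
def IsSoleNeighbor (r : ℝ) (Y : Finset Λ) (x y : Λ) : Prop :=
  ∀ z ∈ Y.erase y, d y z ≤ r ↔ z = x

lemma exists_isSoleNeighbor {r : ℝ} {Y : Finset Λ} (hY : 3 ≤ Y.card) (h : spread d Y ≤ r)
    {x : Λ} (hx : x ∈ Y) (hx' : r < spread d (Y.erase x)) :
    ∃ y ∈ Y, y ≠ x ∧ IsSoleNeighbor d r Y x y := by
  have hYx : (Y.erase x).Nontrivial := by
    rw [← Finset.one_lt_card_iff_nontrivial, Finset.card_erase_of_mem hx]
    omega
  have hYnt : Y.Nontrivial := hYx.mono (Y.erase_subset x)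
  obtain ⟨y, hy, hfar⟩ : ∃ y ∈ Y.erase x, ∀ z ∈ (Y.erase x).erase y, r < d y z := by
    by_contra! hnear
    exact hx'.not_ge ((spread_le_iff d hYx).2 hnear)
  have hfar' : ∀ z ∈ Y.erase y, z ≠ x → r < d y z := fun z hz hzx =>
    hfar z (Finset.mem_erase.2 ⟨Finset.ne_of_mem_erase hz,
      Finset.mem_erase.2 ⟨hzx, Finset.mem_of_mem_erase hz⟩⟩)
  obtain ⟨z, hz, hyz⟩ := (spread_le_iff d hYnt).1 h y (Finset.mem_of_mem_erase hy)
  have hzx : z = x := by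
    by_contra hzx
    exact (hfar' z hz hzx).not_ge hyz
  refine ⟨y, Finset.mem_of_mem_erase hy, Finset.ne_of_mem_erase hy,
    fun w hw => ⟨fun hyw => ?_, fun hwx => hwx ▸ hzx ▸ hyz⟩⟩
  by_contra hwx
  exact (hfar' w hw hwx).not_ge hyw

lemma setDist_pair_gt_of_isSoleNeighbor (hsym : ∀ x y, d x y = d y x) {r : ℝ} {Y : Finset Λ}
    {p : Λ → Λ} (hpY : Set.MapsTo p Y Y) (hpx : ∀ x ∈ Y, p x ≠ x)
    (hp : ∀ x ∈ Y, IsSoleNeighbor d r Y x (p x))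
    {a : Λ} (ha : a ∈ Y) :
    ∀ s ∈ ({a, p a} : Finset Λ), ∀ t ∈ Y \ {a, p a}, r < d s t := by
  have hinj : Set.InjOn p Y := by
    intro x hx x' hx' hpxx'
    have hx'p : x' ∈ Y.erase (p x') := Finset.mem_erase.2 ⟨(hpx x' hx').symm, hx'⟩
    have hnear : d (p x') x' ≤ r := (hp x' hx' x' hx'p).2 rfl
    rw [← hpxx'] at hx'p hnear
    exact ((hp x hx x' hx'p).1 hnear).symm
  have hsurj := Finset.surjOn_of_injOn_of_card_le p hpY hinj le_rfl
  intro s hs t ht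
  obtain ⟨htY, htJ⟩ := Finset.mem_sdiff.1 ht
  simp only [Finset.mem_insert, Finset.mem_singleton, not_or] at hs htJ
  obtain ⟨hta, htpa⟩ := htJ
  by_contra! hst
  rcases hs with hsa | hspa
  · obtain ⟨c, hc, rfl⟩ := hsurj htY
    have hac : a = c :=
      (hp c hc a (Finset.mem_erase.2 ⟨Ne.symm hta, ha⟩)).1 (hsym a _ ▸ hsa ▸ hst)
    exact htpa (hac ▸ rfl)
  · exact hta ((hp a ha t (Finset.mem_erase.2 ⟨htpa, htY⟩)).1 (hspa ▸ hst))

end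

theorem stmt3_general {Λ : Type*} [DecidableEq Λ] (d : Λ → Λ → ℝ)
    (hsym : ∀ x y, d x y = d y x)
    (Y : Finset Λ) (hY : 3 ≤ Y.card) (r : ℝ)
    (h1 : spread d Y ≤ r) (h2 : spread2 d Y ≤ r) :
    ∃ x ∈ Y, spread d (Y.erase x) ≤ r := by
  by_contra! hcon
  choose! p hpY hpx hp using fun x hx => exists_isSoleNeighbor d hY h1 hx (hcon x hx)
  obtain ⟨a, ha⟩ := Finset.card_pos.1 (by omega : 0 < Y.card)
  have hJY : {a, p a} ⊆ Y := Finset.insert_subset ha (Finset.singleton_subset_iff.2 (hpY a ha))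
  have hJ : ({a, p a} : Finset Λ).card = 2 := Finset.card_pair (hpx a ha).symm
  have hrest : (Y \ {a, p a}).Nonempty := by
    rw [← Finset.card_pos, Finset.card_sdiff_of_subset hJY, hJ]
    omega
  obtain ⟨s, hs, t, ht, hst⟩ := (setDist_le_iff d ⟨a, Finset.mem_insert_self a _⟩ hrest).1
    ((setDist_le_spread2 d hJY hJ).trans h2)
  exact (setDist_pair_gt_of_isSoleNeighbor d hsym hpY hpx hp ha s hs t ht).not_ge hst

theorem stmt3 {Λ : Type*} [DecidableEq Λ] (d : Λ → Λ → ℝ)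
    (hsym : ∀ x y, d x y = d y x) (hnonneg : ∀ x y, 0 ≤ d x y)
    (Y : Finset Λ) (hY : 3 ≤ Y.card) (r : ℝ) (hr : 0 < r)
    (h1 : spread d Y ≤ r) (h2 : spread2 d Y ≤ r) :
    ∃ x ∈ Y, spread d (Y.erase x) ≤ r :=
  stmt3_general d hsym Y hY r h1 h2
end

section
/- Let Λ be a set with a symmetric nonnegative distance function d, let X ⊆ Λ be finite, let r > 0, and let N_r ∈ ℕ be such that for every x ∈ X the set {y ∈ X : d(x,y) ≤ r} has at most N_r elements. Then for every n ≥ 2 the recursion bound N(X, n+2, r) ≤ (n+1)·N_r·N(X, n+1, r) + |X|·N_r·N(X, n, r) holds. -/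
open scoped BigOperators

/-! A set `Y` of `n + 2` points with `Δ(Y) ≤ r` is a finite graph without isolated vertices
(join two points at distance `≤ r`). Either some vertex `y` can be deleted without creating an
isolated vertex, and then `Y = Y' ∪ {y}` with `Δ(Y') ≤ r` and `y` one of the at most
`(n + 1)·N_r` points within `r` of `Y'`; or every deletion isolates a vertex, and then two
vertices `y, w` are each other's only neighbours, so `Y = Y'' ∪ {y, w}` with `Δ(Y'') ≤ r` and
`(y, w)` one of the at most `|X|·N_r` pairs of `X` at distance `≤ r`. -/

open Finset

section NoIsolated

variable {α : Type*} [DecidableEq α] {R : α → α → Prop} {Y : Finset α} {y w : α}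

def NoIsolated (R : α → α → Prop) (Y : Finset α) : Prop :=
  ∀ y ∈ Y, ∃ z ∈ Y.erase y, R y z

lemma exists_isolated_of_not_noIsolated (h : ¬NoIsolated R Y) :
    ∃ w ∈ Y, ∀ z ∈ Y.erase w, ¬R w z := by
  simpa [NoIsolated] using h

lemma NoIsolated.rel_of_isolated_erase (hY : NoIsolated R Y) (hw : w ∈ Y.erase y)
    (hiso : ∀ z ∈ (Y.erase y).erase w, ¬R w z) : R w y := by
  obtain ⟨z, hz, hwz⟩ := hY w (mem_of_mem_erase hw)
  by_contra hwy
  have hzy : z ≠ y := by rintro rfl; exact hwy hwz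
  exact hiso z (by rw [erase_right_comm]; exact mem_erase.2 ⟨hzy, hz⟩) hwz

lemma NoIsolated.exists_erase_or_exists_erase_pair (hR : ∀ a b, R a b → R b a)
    (hY : NoIsolated R Y) (hne : Y.Nonempty) :
    (∃ y ∈ Y, NoIsolated R (Y.erase y)) ∨
      ∃ y ∈ Y, ∃ w ∈ Y.erase y, R y w ∧ NoIsolated R ((Y.erase y).erase w) := by
  refine or_iff_not_imp_left.2 fun h => ?_
  push Not at h
  obtain ⟨y, hy⟩ := hne
  obtain ⟨w, hw, hw_iso⟩ := exists_isolated_of_not_noIsolated (h y hy)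
  have hwY : w ∈ Y := mem_of_mem_erase hw
  obtain ⟨u, hu, hu_iso⟩ := exists_isolated_of_not_noIsolated (h w hwY)
  have huw : R u w := hY.rel_of_isolated_erase hu hu_iso
  -- `w` is isolated once `y` is gone, so its neighbour `u` must be `y`.
  obtain rfl : y = u := by
    by_contra hyu
    exact hw_iso u (by simp_all [mem_erase, Ne.symm hyu]) (hR _ _ huw)
  refine ⟨y, hy, w, hw, hR _ _ (hY.rel_of_isolated_erase hw hw_iso), fun v hv => ?_⟩
  obtain ⟨z, hz, hvz⟩ := hY v (mem_of_mem_erase (mem_of_mem_erase hv))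
  have hzw : z ≠ w := by
    rintro rfl; exact hw_iso v hv (hR _ _ hvz)
  have hzy : z ≠ y := by
    rintro rfl; exact hu_iso v (by rwa [erase_right_comm]) (hR _ _ hvz)
  exact ⟨z, by simp_all [mem_erase], hvz⟩

end NoIsolated

section Spread

variable {Λ : Type*} (d : Λ → Λ → ℝ)

lemma setDist_singleton_le_iff (y : Λ) {T : Finset Λ} (hT : T.Nonempty) (r : ℝ) :
    setDist d {y} T ≤ r ↔ ∃ t ∈ T, d y t ≤ r := by
  have hset : {s : ℝ | ∃ a ∈ ({y} : Finset Λ), ∃ t ∈ T, s = d a t} = d y '' T := by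
    ext s
    simp [eq_comm]
  rw [setDist, hset, ← inf'_eq_csInf_image T hT, inf'_le_iff]

variable [DecidableEq Λ]

lemma spread_le_iff_s5 {Y : Finset Λ} (hY : 2 ≤ Y.card) (r : ℝ) :
    spread d Y ≤ r ↔ NoIsolated (fun a b => d a b ≤ r) Y := by
  have herase : ∀ y ∈ Y, (Y.erase y).Nonempty := fun y hy => by
    rw [← card_pos, card_erase_of_mem hy]; omega
  have hset : {s : ℝ | ∃ y ∈ Y, s = setDist d {y} (Y.erase y)}
      = (fun y => setDist d {y} (Y.erase y)) '' Y := by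
    ext s
    simp [eq_comm]
  rw [spread, hset, ← sup'_eq_csSup_image Y (card_pos.mp (by omega)), sup'_le_iff]
  exact forall₂_congr fun y hy => setDist_singleton_le_iff d y (herase y hy) r

lemma exists_spread_erase_le_or_exists_spread_erase_pair_le (hsym : ∀ x y, d x y = d y x)
    {Y : Finset Λ} (hY : 4 ≤ Y.card) {r : ℝ} (h : spread d Y ≤ r) :
    (∃ y ∈ Y, spread d (Y.erase y) ≤ r) ∨
      ∃ y ∈ Y, ∃ w ∈ Y.erase y, d y w ≤ r ∧ spread d ((Y.erase y).erase w) ≤ r := by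
  have hcard_erase : ∀ y ∈ Y, 3 ≤ (Y.erase y).card := fun y hy => by
    rw [card_erase_of_mem hy]; omega
  have hcard_erase_pair : ∀ y ∈ Y, ∀ w ∈ Y.erase y, 2 ≤ ((Y.erase y).erase w).card :=
    fun y hy w hw => by rw [card_erase_of_mem hw]; have := hcard_erase y hy; omega
  rw [spread_le_iff_s5 d (by omega)] at h
  rcases h.exists_erase_or_exists_erase_pair (fun a b hab => by rwa [hsym])
      (card_pos.mp (by omega)) with ⟨y, hy, hY'⟩ | ⟨y, hy, w, hw, hyw, hY''⟩
  · exact .inl ⟨y, hy, (spread_le_iff_s5 d (Nat.le_of_succ_le (hcard_erase y hy)) r).2 hY'⟩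
  · exact .inr ⟨y, hy, w, hw, hyw, (spread_le_iff_s5 d (hcard_erase_pair y hy w hw) r).2 hY''⟩

end Spread

lemma card_le_mul_card_of_forall_exists_mem_image {β γ δ : Type*} [DecidableEq β]
    {S : Finset β} {T : Finset γ} (g : γ → Finset δ) (f : γ → δ → β) {c : ℕ}
    (hg : ∀ t ∈ T, (g t).card ≤ c) (hS : ∀ s ∈ S, ∃ t ∈ T, ∃ x ∈ g t, f t x = s) :
    S.card ≤ c * T.card :=
  calc S.card ≤ (T.biUnion fun t => (g t).image (f t)).card :=
        card_le_card fun s hs => by simpa using hS s hs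
    _ ≤ ∑ t ∈ T, ((g t).image (f t)).card := card_biUnion_le
    _ ≤ ∑ _t ∈ T, c := sum_le_sum fun t ht => card_image_le.trans (hg t ht)
    _ = c * T.card := by rw [sum_const, smul_eq_mul, mul_comm]

section Counting

variable {Λ : Type*} [DecidableEq Λ] (d : Λ → Λ → ℝ) (X : Finset Λ) (r : ℝ)

noncomputable def boundedSpreadSets (n : ℕ) : Finset (Finset Λ) :=
  (X.powersetCard n).filter fun Y => spread d Y ≤ r

lemma card_boundedSpreadSets (n : ℕ) :
    (boundedSpreadSets d X r n).card = countSpread d X n r := by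
  rw [countSpread, ← Set.ncard_coe_finset]
  congr 1
  ext Y
  simp [boundedSpreadSets, mem_powersetCard, and_assoc]

variable {d X r} {Nr : ℕ} (hball : ∀ x ∈ X, (X.filter (d x · ≤ r)).card ≤ Nr)
include hball

lemma card_filter_exists_spread_erase_le (hsym : ∀ x y, d x y = d y x) (n : ℕ) :
    ((boundedSpreadSets d X r (n + 2)).filter
        fun Y => ∃ y ∈ Y, spread d (Y.erase y) ≤ r).card ≤
      (n + 1) * Nr * (boundedSpreadSets d X r (n + 1)).card := by
  refine card_le_mul_card_of_forall_exists_mem_image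
    (fun Y' => Y'.biUnion fun z => X.filter (d z · ≤ r)) (fun Y' y => insert y Y') ?_ ?_
  · intro Y' hY'
    simp only [boundedSpreadSets, mem_filter, mem_powersetCard] at hY'
    calc _ ≤ ∑ z ∈ Y', (X.filter (d z · ≤ r)).card := card_biUnion_le
      _ ≤ ∑ _z ∈ Y', Nr := sum_le_sum fun z hz => hball z (hY'.1.1 hz)
      _ = (n + 1) * Nr := by rw [sum_const, hY'.1.2, smul_eq_mul]
  · intro Y hY
    simp only [boundedSpreadSets, mem_filter, mem_powersetCard] at hY
    obtain ⟨⟨⟨hYX, hYcard⟩, hYr⟩, y, hy, hY'r⟩ := hY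
    obtain ⟨z, hz, hyz⟩ := (spread_le_iff_s5 d (by omega) r).1 hYr y hy
    refine ⟨Y.erase y, ?_, y, ?_, insert_erase hy⟩
    · simp only [boundedSpreadSets, mem_filter, mem_powersetCard]
      refine ⟨⟨(erase_subset y Y).trans hYX, ?_⟩, hY'r⟩
      rw [card_erase_of_mem hy, hYcard]; rfl
    · exact mem_biUnion.2 ⟨z, hz, mem_filter.2 ⟨hYX hy, by rwa [hsym]⟩⟩

lemma card_filter_not_exists_spread_erase_le (hsym : ∀ x y, d x y = d y x) {n : ℕ}
    (hn : 2 ≤ n) :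
    ((boundedSpreadSets d X r (n + 2)).filter
        fun Y => ¬∃ y ∈ Y, spread d (Y.erase y) ≤ r).card ≤
      X.card * Nr * (boundedSpreadSets d X r n).card := by
  refine card_le_mul_card_of_forall_exists_mem_image
    (fun _ => X.sigma fun x => X.filter (d x · ≤ r))
    (fun Y'' p => insert p.1 (insert p.2 Y'')) (fun _ _ => ?_) ?_
  · calc _ = ∑ x ∈ X, (X.filter (d x · ≤ r)).card := card_sigma _ _
      _ ≤ ∑ _x ∈ X, Nr := sum_le_sum hball
      _ = X.card * Nr := by rw [sum_const, smul_eq_mul]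
  · intro Y hY
    simp only [boundedSpreadSets, mem_filter, mem_powersetCard] at hY
    obtain ⟨⟨⟨hYX, hYcard⟩, hYr⟩, hY'⟩ := hY
    obtain ⟨y, hy, w, hw, hyw, hY''r⟩ :=
      (exists_spread_erase_le_or_exists_spread_erase_pair_le d hsym (by omega) hYr).resolve_left
        hY'
    refine ⟨(Y.erase y).erase w, ?_, ⟨y, w⟩, ?_, ?_⟩
    · simp only [boundedSpreadSets, mem_filter, mem_powersetCard]
      refine ⟨⟨(erase_subset _ _).trans ((erase_subset _ _).trans hYX), ?_⟩, hY''r⟩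
      rw [card_erase_of_mem hw, card_erase_of_mem hy, hYcard]; rfl
    · exact mem_sigma.2 ⟨hYX hy, mem_filter.2 ⟨hYX (mem_of_mem_erase hw), hyw⟩⟩
    · simp only [insert_erase hw, insert_erase hy]

end Counting

theorem stmt5_general {Λ : Type*} [DecidableEq Λ] (d : Λ → Λ → ℝ)
    (hsym : ∀ x y, d x y = d y x)
    (X : Finset Λ) (r : ℝ) (Nr : ℕ)
    (hN : ∀ x ∈ X, ({y | y ∈ X ∧ d x y ≤ r} : Set Λ).ncard ≤ Nr)
    (n : ℕ) (hn : 2 ≤ n) :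
    countSpread d X (n + 2) r ≤
      (n + 1) * Nr * countSpread d X (n + 1) r + X.card * Nr * countSpread d X n r := by
  have hball : ∀ x ∈ X, (X.filter (d x · ≤ r)).card ≤ Nr := fun x hx => by
    rw [← Set.ncard_coe_finset, coe_filter]
    exact hN x hx
  simp only [← card_boundedSpreadSets d X r]
  rw [← card_filter_add_card_filter_not fun Y => ∃ y ∈ Y, spread d (Y.erase y) ≤ r]
  exact add_le_add (card_filter_exists_spread_erase_le hball hsym n)
    (card_filter_not_exists_spread_erase_le hball hsym hn)

theorem stmt5 {Λ : Type*} [DecidableEq Λ] (d : Λ → Λ → ℝ)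
    (hsym : ∀ x y, d x y = d y x) (hnonneg : ∀ x y, 0 ≤ d x y)
    (X : Finset Λ) (r : ℝ) (hr : 0 < r) (Nr : ℕ)
    (hN : ∀ x ∈ X, ({y | y ∈ X ∧ d x y ≤ r} : Set Λ).ncard ≤ Nr)
    (n : ℕ) (hn : 2 ≤ n) :
    countSpread d X (n + 2) r ≤
      (n + 1) * Nr * countSpread d X (n + 1) r + X.card * Nr * countSpread d X n r :=
  stmt5_general d hsym X r Nr hN n hn
end

section
/- Let Λ be a set with a symmetric distance function d satisfying d(x,y) > 0 for x ≠ y, let X ⊆ Λ be finite, and let N : ℕ → ℕ be such that for every x ∈ X and every integer r ≥ 1 the set {y ∈ X : d(x,y) ≤ r} has at most N(r) elements. Let m ≥ 2 and suppose the series ∑_{r=1}^∞ N(r)^{m/2} e^{−r} converges (real exponent m/2). Then, with (q_n)_{n≥2} the sequence determined by q₂ = 1, q₃ = 2, q_{n+2} = (n+1)q_{n+1} + q_n, the following bound holds: ∑_{Y ⊆ X, |Y| = m} e^{−Δ(Y)} ≤ e · q_m · |X|^{m/2} · ∑_{r=1}^∞ N(r)^{m/2} e^{−r}. -/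
/-!
`Δ(Y) ≤ r` says that every point of `Y` has another point of `Y` within distance `r`. An
`n`-point set with this property either keeps it after deleting a suitable point, and then arises
from an `(n-1)`-point one by adding a point within `r` of it (at most `(n-1)·M` ways, where `M`
bounds the `r`-balls of `X`), or it contains two points that are each other's only neighbours
within `r`, and then arises from an `(n-2)`-point one by adding a close pair (at most `|X|·M` ways).
This is the recursion of `q`, so there are at most `q_n (|X| M)^{n/2}` such sets, using `M ≤ |X|`.
Grouping the `Y` by `k = ⌊Δ(Y)⌋`, so that `e^{-Δ(Y)} ≤ e·e^{-(k+1)}` and `M = N(k+1)`, gives the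
bound.
-/

open scoped BigOperators

open Finset

section Definitions

variable {Λ : Type*} (d : Λ → Λ → ℝ) (X : Finset Λ) (r : ℝ)

def Clustered (Y : Finset Λ) : Prop :=
  ∀ y ∈ Y, ∃ z ∈ Y, z ≠ y ∧ d y z ≤ r

noncomputable def finsetBall (x : Λ) : Finset Λ :=
  X.filter fun y => d x y ≤ r

open scoped Classical in
noncomputable def clusters (n : ℕ) : Finset (Finset Λ) :=
  (X.powersetCard n).filter (Clustered d r)

variable [DecidableEq Λ]

noncomputable def pointExtensions (Y : Finset Λ) : Finset (Finset Λ) :=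
  Y.biUnion fun a => (finsetBall d X r a).image (insert · Y)

noncomputable def pairExtensions (Y : Finset Λ) : Finset (Finset Λ) :=
  X.biUnion fun y => (finsetBall d X r y).image fun z => insert z (insert y Y)

end Definitions

section Spread

variable {Λ : Type*} {d : Λ → Λ → ℝ}

theorem setDist_nonneg {S T : Finset Λ} (h : ∀ s ∈ S, ∀ t ∈ T, 0 ≤ d s t) :
    0 ≤ setDist d S T :=
  Real.sInf_nonneg <| by rintro _ ⟨s, hs, t, ht, rfl⟩; exact h s hs t ht

theorem setDist_singleton_eq_inf' (y : Λ) {T : Finset Λ} (hT : T.Nonempty) :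
    setDist d {y} T = T.inf' hT (d y) := by
  rw [inf'_eq_csInf_image, setDist]
  congr 1
  ext r
  simp [eq_comm]

variable [DecidableEq Λ]

theorem spread_nonneg (hd : ∀ x y, x ≠ y → 0 ≤ d x y) (Y : Finset Λ) : 0 ≤ spread d Y :=
  Real.sSup_nonneg <| by
    rintro _ ⟨y, -, rfl⟩
    refine setDist_nonneg fun s hs t ht => hd s t ?_
    rw [mem_singleton.mp hs]
    exact (ne_of_mem_erase ht).symm

theorem spread_eq_sup' {Y : Finset Λ} (hY : Y.Nonempty) :
    spread d Y = Y.sup' hY (fun y => setDist d {y} (Y.erase y)) := by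
  rw [sup'_eq_csSup_image, spread]
  congr 1
  ext r
  simp [eq_comm]

theorem spread_le_iff_clustered {Y : Finset Λ} (hY : 2 ≤ #Y) {r : ℝ} :
    spread d Y ≤ r ↔ Clustered d r Y := by
  have hne : ∀ y ∈ Y, (Y.erase y).Nonempty := fun y hy => by
    rw [← card_pos, card_erase_of_mem hy]; omega
  rw [spread_eq_sup' (card_pos.mp (by omega)), sup'_le_iff]
  refine forall₂_congr fun y hy => ?_
  rw [setDist_singleton_eq_inf' y (hne y hy), inf'_le_iff]
  simp only [mem_erase, and_assoc]
  exact ⟨fun ⟨z, hzy, hz, h⟩ => ⟨z, hz, hzy, h⟩, fun ⟨z, hz, hzy, h⟩ => ⟨z, hzy, hz, h⟩⟩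

end Spread

theorem qseq_add_three (n : ℕ) : qseq (n + 3) = (n + 2) * qseq (n + 2) + qseq (n + 1) := by
  cases n with
  | zero => rfl
  | succ n => rfl

theorem Real.exp_neg_le_exp_one_mul_exp_neg_floor {t : ℝ} (ht : 0 ≤ t) :
    Real.exp (-t) ≤ Real.exp 1 * Real.exp (-(⌊t⌋₊ + 1)) := by
  rw [← Real.exp_add]
  exact Real.exp_le_exp.mpr (by linarith [Nat.floor_le ht])

theorem sum_exp_neg_le_of_card_floor_le {ι : Type*} {S : Finset ι} {t : ι → ℝ} {g : ℕ → ℝ}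
    (ht : ∀ i ∈ S, 0 ≤ t i) (hg : Summable g) (hg0 : ∀ s, 0 ≤ g s)
    (hfiber : ∀ s : ℕ, #(S.filter (⌊t ·⌋₊ = s)) * Real.exp (-((s : ℝ) + 1)) ≤ g s) :
    ∑ i ∈ S, Real.exp (-t i) ≤ Real.exp 1 * ∑' s, g s :=
  calc ∑ i ∈ S, Real.exp (-t i)
      ≤ ∑ i ∈ S, Real.exp 1 * Real.exp (-(⌊t i⌋₊ + 1)) :=
        sum_le_sum fun i hi => Real.exp_neg_le_exp_one_mul_exp_neg_floor (ht i hi)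
    _ = Real.exp 1 * ∑ s ∈ S.image (⌊t ·⌋₊), #(S.filter (⌊t ·⌋₊ = s)) • Real.exp (-(s + 1)) := by
        rw [← mul_sum, sum_comp (fun s : ℕ => Real.exp (-((s : ℝ) + 1)))]
    _ ≤ Real.exp 1 * ∑ s ∈ S.image (⌊t ·⌋₊), g s := by
        gcongr with s
        rw [nsmul_eq_mul]
        exact hfiber s
    _ ≤ Real.exp 1 * ∑' s, g s := by
        gcongr
        exact hg.sum_le_tsum _ fun s _ => hg0 s

theorem le_qseq_mul_pow {c : ℕ → ℝ} {a s : ℝ} (ha : 0 ≤ a) (has : a ≤ s) (h0 : c 0 ≤ 1)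
    (h1 : c 1 ≤ 0) (hrec : ∀ n : ℕ, c (n + 2) ≤ c (n + 1) * ((n + 1) * a) + c n * s ^ 2)
    (n : ℕ) : c (n + 1) ≤ qseq (n + 1) * s ^ (n + 1) := by
  have hs : 0 ≤ s := ha.trans has
  suffices h : ∀ n : ℕ, c (n + 1) ≤ qseq (n + 1) * s ^ (n + 1) ∧
      c (n + 2) ≤ qseq (n + 2) * s ^ (n + 2) from (h n).1
  intro n
  induction n with
  | zero =>
    refine ⟨by simpa [qseq] using h1, ?_⟩
    have h2 := hrec 0
    norm_num [qseq] at h2 ⊢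
    linarith [mul_le_mul_of_nonneg_right h0 (sq_nonneg s), mul_nonpos_of_nonpos_of_nonneg h1 ha]
  | succ n ih =>
    refine ⟨ih.2, ?_⟩
    calc c (n + 3) ≤ c (n + 2) * ((n + 2) * a) + c (n + 1) * s ^ 2 := by
          simpa [add_assoc, one_add_one_eq_two] using hrec (n + 1)
      _ ≤ qseq (n + 2) * s ^ (n + 2) * ((n + 2) * s) + qseq (n + 1) * s ^ (n + 1) * s ^ 2 := by
          gcongr ?_ + ?_
          · exact mul_le_mul ih.2 (by gcongr) (mul_nonneg (by positivity) ha)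
              (mul_nonneg (Nat.cast_nonneg _) (pow_nonneg hs _))
          · exact mul_le_mul_of_nonneg_right ih.1 (sq_nonneg s)
      _ = qseq (n + 3) * s ^ (n + 3) := by
          rw [qseq_add_three]; push_cast; ring

section Clusters

variable {Λ : Type*} [DecidableEq Λ] {d : Λ → Λ → ℝ} {r : ℝ} {Y : Finset Λ}

theorem Clustered.exists_partner_of_not_clustered_erase (hY : Clustered d r Y) {y : Λ}
    (hne : ¬ Clustered d r (Y.erase y)) :
    ∃ w ∈ Y, w ≠ y ∧ d w y ≤ r ∧ ∀ z ∈ Y, z ≠ w → d w z ≤ r → z = y := by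
  simp only [Clustered, mem_erase, not_forall, not_exists, not_and, not_le] at hne
  obtain ⟨w, ⟨hwy, hw⟩, hfar⟩ := hne
  have only_y : ∀ z ∈ Y, z ≠ w → d w z ≤ r → z = y := fun z hz hzw hwz => by
    by_contra hzy
    exact (hfar z ⟨hzy, hz⟩ hzw).not_ge hwz
  obtain ⟨z, hz, hzw, hwz⟩ := hY w hw
  exact ⟨w, hw, hwy, only_y z hz hzw hwz ▸ hwz, only_y⟩

/-- The two points found are each other's only neighbours within `r`, so removing them strands
no other point. -/
theorem Clustered.exists_isolated_pair (hsym : ∀ x y, d x y = d y x) (hY : Clustered d r Y)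
    (hYne : Y.Nonempty) (h : ∀ y ∈ Y, ¬ Clustered d r (Y.erase y)) :
    ∃ y ∈ Y, ∃ w ∈ Y, w ≠ y ∧ d y w ≤ r ∧ Clustered d r ((Y.erase y).erase w) := by
  obtain ⟨y, hy⟩ := hYne
  obtain ⟨w, hw, hwy, hdwy, only_y⟩ := hY.exists_partner_of_not_clustered_erase (h y hy)
  obtain ⟨y', hy', hy'w, hdy'w, only_w⟩ := hY.exists_partner_of_not_clustered_erase (h w hw)
  obtain rfl : y = y' := (only_y y' hy' hy'w (hsym w y' ▸ hdy'w)).symm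
  refine ⟨y, hy, w, hw, hwy, hsym y w ▸ hdwy, fun v hv => ?_⟩
  simp only [mem_erase] at hv
  obtain ⟨hvw, hvy, hvY⟩ := hv
  obtain ⟨z, hz, hzv, hvz⟩ := hY v hvY
  have hzy : z ≠ y := by
    rintro rfl
    exact hvw (only_w v hvY hvy (hsym v z ▸ hvz))
  have hzw : z ≠ w := by
    rintro rfl
    exact hvy (only_y v hvY hvw (hsym v z ▸ hvz))
  exact ⟨z, by simp [hz, hzy, hzw], hzv, hvz⟩

variable {X : Finset Λ} {M n : ℕ}

omit [DecidableEq Λ] in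
theorem mem_clusters : Y ∈ clusters d X r n ↔ Y ⊆ X ∧ #Y = n ∧ Clustered d r Y := by
  simp [clusters, mem_powersetCard, and_assoc]

theorem insert_mem_pointExtensions {a y : Λ} (ha : a ∈ Y) (hy : y ∈ X) (hay : d a y ≤ r) :
    insert y Y ∈ pointExtensions d X r Y :=
  mem_biUnion.mpr ⟨a, ha, mem_image_of_mem _ (mem_filter.mpr ⟨hy, hay⟩)⟩

theorem insert_insert_mem_pairExtensions {y z : Λ} (hy : y ∈ X) (hz : z ∈ X) (hyz : d y z ≤ r) :
    insert z (insert y Y) ∈ pairExtensions d X r Y :=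
  mem_biUnion.mpr ⟨y, hy, mem_image_of_mem _ (mem_filter.mpr ⟨hz, hyz⟩)⟩

theorem card_pointExtensions_le (hball : ∀ x ∈ X, #(finsetBall d X r x) ≤ M) (hYX : Y ⊆ X) :
    #(pointExtensions d X r Y) ≤ #Y * M :=
  card_biUnion_le_card_mul _ _ _ fun a ha => card_image_le.trans (hball a (hYX ha))

theorem card_pairExtensions_le (hball : ∀ x ∈ X, #(finsetBall d X r x) ≤ M) :
    #(pairExtensions d X r Y) ≤ #X * M :=
  card_biUnion_le_card_mul _ _ _ fun y hy => card_image_le.trans (hball y hy)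

theorem clusters_add_two_subset (hsym : ∀ x y, d x y = d y x) (n : ℕ) :
    clusters d X r (n + 2) ⊆ (clusters d X r (n + 1)).biUnion (pointExtensions d X r) ∪
      (clusters d X r n).biUnion (pairExtensions d X r) := by
  intro Y hY
  obtain ⟨hYX, hcard, hclus⟩ := mem_clusters.mp hY
  rw [mem_union, mem_biUnion, mem_biUnion]
  by_cases hremovable : ∃ y ∈ Y, Clustered d r (Y.erase y)
  · obtain ⟨y, hy, hclus'⟩ := hremovable
    obtain ⟨a, ha, hay, hya⟩ := hclus y hy
    refine Or.inl ⟨Y.erase y, mem_clusters.mpr ⟨(erase_subset y Y).trans hYX, ?_, hclus'⟩, ?_⟩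
    · rw [card_erase_of_mem hy, hcard]; rfl
    · simpa only [insert_erase hy] using
        insert_mem_pointExtensions (mem_erase.mpr ⟨hay, ha⟩) (hYX hy) (hsym a y ▸ hya)
  · push Not at hremovable
    obtain ⟨y, hy, w, hw, hwy, hyw, hclus''⟩ :=
      hclus.exists_isolated_pair hsym (card_pos.mp (by omega)) hremovable
    have hw' : w ∈ Y.erase y := mem_erase.mpr ⟨hwy, hw⟩
    refine Or.inr ⟨(Y.erase y).erase w, mem_clusters.mpr
      ⟨((erase_subset _ _).trans (erase_subset _ _)).trans hYX, ?_, hclus''⟩, ?_⟩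
    · rw [card_erase_of_mem hw', card_erase_of_mem hy, hcard]; rfl
    · have hY_eq : insert w (insert y ((Y.erase y).erase w)) = Y := by
        rw [erase_right_comm, insert_erase (mem_erase.mpr ⟨hwy.symm, hy⟩), insert_erase hw]
      have hext := insert_insert_mem_pairExtensions (Y := (Y.erase y).erase w) (hYX hy) (hYX hw) hyw
      rwa [hY_eq] at hext

theorem card_clusters_add_two_le (hsym : ∀ x y, d x y = d y x)
    (hball : ∀ x ∈ X, #(finsetBall d X r x) ≤ M) (n : ℕ) :
    #(clusters d X r (n + 2)) ≤
      #(clusters d X r (n + 1)) * ((n + 1) * M) + #(clusters d X r n) * (#X * M) := by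
  refine (card_le_card (clusters_add_two_subset hsym n)).trans <| (card_union_le _ _).trans ?_
  gcongr
  · refine card_biUnion_le_card_mul _ _ _ fun Y hY => ?_
    obtain ⟨hYX, hcard, -⟩ := mem_clusters.mp hY
    simpa only [hcard] using card_pointExtensions_le hball hYX
  · exact card_biUnion_le_card_mul _ _ _ fun Y _ => card_pairExtensions_le hball

omit [DecidableEq Λ] in
theorem clusters_one : clusters d X r 1 = ∅ := by
  refine eq_empty_of_forall_notMem fun Y hY => ?_
  obtain ⟨-, hcard, hclus⟩ := mem_clusters.mp hY
  obtain ⟨y, rfl⟩ := card_eq_one.mp hcard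
  obtain ⟨z, hz, hzy, -⟩ := hclus y (mem_singleton_self y)
  exact hzy (mem_singleton.mp hz)

omit [DecidableEq Λ] in
theorem card_clusters_zero_le : #(clusters d X r 0) ≤ 1 := by
  classical
  exact (card_filter_le _ _).trans (by simp)

theorem card_clusters_le (hsym : ∀ x y, d x y = d y x)
    (hball : ∀ x ∈ X, #(finsetBall d X r x) ≤ M) (hn : 1 ≤ n) :
    (#(clusters d X r n) : ℝ) ≤ qseq n * (#X : ℝ) ^ ((n : ℝ) / 2) * (M : ℝ) ^ ((n : ℝ) / 2) := by
  obtain ⟨n, rfl⟩ : ∃ k, n = k + 1 := ⟨n - 1, by omega⟩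
  rw [mul_assoc, ← Real.mul_rpow (by positivity) (by positivity),
    Real.rpow_div_two_eq_sqrt _ (by positivity), Real.rpow_natCast]
  -- Balls lie in `X`, so `M` may be lowered to at most `#X`, which makes `M ≤ √(#X * M)`.
  set M' := min M #X
  have hball' : ∀ x ∈ X, #(finsetBall d X r x) ≤ M' :=
    fun x hx => le_min (hball x hx) (card_filter_le _ _)
  have hM' : (M' : ℝ) ≤ √(#X * M') := by
    rw [Real.le_sqrt (by positivity) (by positivity), sq]
    gcongr
    exact_mod_cast min_le_right M #X
  calc (#(clusters d X r (n + 1)) : ℝ) ≤ qseq (n + 1) * √(#X * M') ^ (n + 1) := by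
        refine le_qseq_mul_pow (c := fun n => (#(clusters d X r n) : ℝ)) (Nat.cast_nonneg _) hM'
          (by exact_mod_cast card_clusters_zero_le) (by simp [clusters_one]) (fun n => ?_) n
        rw [Real.sq_sqrt (by positivity)]
        exact_mod_cast card_clusters_add_two_le hsym hball' n
    _ ≤ qseq (n + 1) * √(#X * M) ^ (n + 1) := by
        gcongr
        exact min_le_left M #X

theorem powersetCard_filter_floor_spread_subset (hn : 2 ≤ n) (s : ℕ) :
    (X.powersetCard n).filter (fun Y => ⌊spread d Y⌋₊ = s) ⊆ clusters d X ((s : ℝ) + 1) n :=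
  fun Y hY => by
    obtain ⟨hY, hsY⟩ := mem_filter.mp hY
    obtain ⟨hYX, hcard⟩ := mem_powersetCard.mp hY
    exact mem_clusters.mpr ⟨hYX, hcard,
      (spread_le_iff_clustered (by omega)).mp (hsY ▸ (Nat.lt_floor_add_one _).le)⟩

end Clusters

theorem stmt7 {Λ : Type*} [DecidableEq Λ] (d : Λ → Λ → ℝ)
    (hsym : ∀ x y, d x y = d y x) (hpos : ∀ x y, x ≠ y → 0 < d x y)
    (X : Finset Λ) (N : ℕ → ℕ)
    (hN : ∀ x ∈ X, ∀ r : ℕ, 1 ≤ r → ({y | y ∈ X ∧ d x y ≤ (r : ℝ)} : Set Λ).ncard ≤ N r)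
    (m : ℕ) (hm : 2 ≤ m)
    (hsum : Summable (fun r : ℕ => (N (r + 1) : ℝ) ^ ((m : ℝ) / 2) * Real.exp (-((r : ℝ) + 1)))) :
    ∑ Y ∈ X.powerset.filter (fun Y => Y.card = m), Real.exp (-(spread d Y)) ≤
      Real.exp 1 * (qseq m : ℝ) * (X.card : ℝ) ^ ((m : ℝ) / 2) *
        ∑' r : ℕ, (N (r + 1) : ℝ) ^ ((m : ℝ) / 2) * Real.exp (-((r : ℝ) + 1)) := by
  classical
  rw [← powersetCard_eq_filter]
  have hball (s : ℕ) : ∀ x ∈ X, #(finsetBall d X ((s : ℝ) + 1) x) ≤ N (s + 1) := fun x hx => by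
    have := hN x hx (s + 1) (by omega)
    push_cast at this
    rwa [← Set.ncard_coe_finset, finsetBall, coe_filter]
  have hfiber (s : ℕ) : #((X.powersetCard m).filter (⌊spread d ·⌋₊ = s)) *
      Real.exp (-((s : ℝ) + 1)) ≤ qseq m * (X.card : ℝ) ^ ((m : ℝ) / 2) *
        ((N (s + 1) : ℝ) ^ ((m : ℝ) / 2) * Real.exp (-((s : ℝ) + 1))) := by
    have hcard := (Nat.cast_le (α := ℝ).mpr
      (card_le_card (powersetCard_filter_floor_spread_subset hm s))).trans
      (card_clusters_le hsym (hball s) (by omega))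
    rw [← mul_assoc]
    exact mul_le_mul_of_nonneg_right hcard (by positivity)
  calc _ ≤ Real.exp 1 * ∑' s : ℕ, qseq m * (X.card : ℝ) ^ ((m : ℝ) / 2) *
          ((N (s + 1) : ℝ) ^ ((m : ℝ) / 2) * Real.exp (-((s : ℝ) + 1))) :=
        sum_exp_neg_le_of_card_floor_le (fun Y _ => spread_nonneg (fun x y h => (hpos x y h).le) Y)
          (hsum.mul_left _) (fun s => by positivity) hfiber
    _ = _ := by rw [tsum_mul_left]; ring
end

section
/- Let A be a unital normed ℂ-algebra with submultiplicative norm, B a unital associative ℂ-algebra, X a finite nonempty set, ι_x : A → B (x ∈ X) algebra homomorphisms with pairwise commuting images for distinct sites, ω : A → ℂ linear, and Φ the associated fluctuation operators. Let φ : B → ℂ be linear, n ≥ 2, and let C ≥ 0 be a constant such that |φ(Φ(b₁)⋯Φ(b_{n−1}))| ≤ C·‖b₁‖⋯‖b_{n−1}‖ for all b₁,…,b_{n−1} ∈ A. Then for all a₁,…,aₙ ∈ A and every index 1 ≤ i ≤ n−1: |φ( Φ(a₁)⋯Φ(a_{i−1}) · ( Φ(a_i)Φ(a_{i+1}) − Φ(a_{i+1})Φ(a_i)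 − ω(a_i a_{i+1} − a_{i+1} a_i)·1_B ) · Φ(a_{i+2})⋯Φ(aₙ) )| ≤ 2 · |X|^{−1/2} · C · ‖a₁‖⋯‖aₙ‖. -/
/-! Sites at distinct points commute, so in `[Φ(a), Φ(b)]` only the diagonal terms of the double
sum survive and the centring scalars drop out: `[Φ(a), Φ(b)] = |X|⁻¹ ∑ₓ ι_x([a, b])`, that is,
`[Φ(a), Φ(b)] − ω([a, b]) = |X|^{-1/2} Φ([a, b])`. The operator to be bounded is therefore
`|X|^{-1/2}` times a product of `n − 1` fluctuations, to which the hypothesis applies, and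
`‖[a, b]‖ ≤ 2‖a‖‖b‖`. -/

open scoped BigOperators

/-- The fluctuation operator `Φ(a) := |X|^{-1/2} ∑_{x∈X} (ι_x(a) − ω(a)·1_B)`. -/
noncomputable def fluct {A B X : Type*} [Ring A] [Algebra ℂ A] [Ring B] [Algebra ℂ B]
    [Fintype X] (ι : X → (A →ₐ[ℂ] B)) (ω : A →ₗ[ℂ] ℂ) (a : A) : B :=
  (((Fintype.card X : ℝ) ^ (-(1 : ℝ) / 2) : ℝ) : ℂ) •
    ∑ x : X, (ι x a - algebraMap ℂ B (ω a))

open Finset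

theorem Real.rpow_neg_one_half_mul_self {x : ℝ} (hx : 0 < x) :
    x ^ (-(1 : ℝ) / 2) * x ^ (-(1 : ℝ) / 2) * x = 1 := by
  rw [← Real.rpow_add hx]
  norm_num
  rw [Real.rpow_neg_one, inv_mul_cancel₀ hx.ne']

theorem norm_mul_sub_mul_le {R : Type*} [NonUnitalSeminormedRing R] (a b : R) :
    ‖a * b - b * a‖ ≤ 2 * ‖a‖ * ‖b‖ :=
  calc ‖a * b - b * a‖ ≤ ‖a‖ * ‖b‖ + ‖b‖ * ‖a‖ :=
        (norm_sub_le _ _).trans (add_le_add (norm_mul_le _ _) (norm_mul_le _ _))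
    _ = 2 * ‖a‖ * ‖b‖ := by ring

theorem Finset.sum_mul_sum_sub_sum_mul_sum {ι R : Type*} [Ring R] (s : Finset ι) (f g : ι → R)
    (h : ∀ x ∈ s, ∀ y ∈ s, x ≠ y → Commute (f x) (g y)) :
    (∑ x ∈ s, f x) * (∑ y ∈ s, g y) - (∑ y ∈ s, g y) * (∑ x ∈ s, f x) =
      ∑ x ∈ s, (f x * g x - g x * f x) := by
  rw [sum_mul_sum, sum_mul_sum, sum_comm (s := s) (t := s) (f := fun y x => g y * f x),
    ← sum_sub_distrib]
  refine sum_congr rfl fun x hx => ?_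
  rw [← sum_sub_distrib, sum_eq_single_of_mem x hx]
  intro y hy hyx
  rw [(h x hx y hy hyx.symm).eq, sub_self]

theorem sub_algebraMap_mul_sub_algebraMap_sub {R B : Type*} [CommSemiring R] [Ring B]
    [Algebra R B] (p q : B) (s t : R) :
    (p - algebraMap R B s) * (q - algebraMap R B t) -
      (q - algebraMap R B t) * (p - algebraMap R B s) = p * q - q * p := by
  simp only [mul_sub, sub_mul]
  rw [Algebra.commutes s q, Algebra.commutes t p, Algebra.commutes s (algebraMap R B t)]
  abel

theorem List.forall_of_forall_ofFn {α : Type*} {N : ℕ} {P : List α → Prop}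
    (h : ∀ b : Fin N → α, P (List.ofFn b)) (L : List α) (hL : L.length = N) : P L := by
  subst hL
  simpa using h L.get

section Fluctuation

variable {A B X : Type*} [Ring A] [Algebra ℂ A] [Ring B] [Algebra ℂ B] [Fintype X]
  (ι : X → (A →ₐ[ℂ] B)) (ω : A →ₗ[ℂ] ℂ)

theorem fluct_eq_smul (a : A) :
    fluct ι ω a = (((Fintype.card X : ℝ) ^ (-(1 : ℝ) / 2) : ℝ) : ℂ) •
      (∑ x, ι x a - algebraMap ℂ B (Fintype.card X * ω a)) := by
  rw [fluct, sum_sub_distrib, sum_const, card_univ, ← nsmul_eq_mul, map_nsmul]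

theorem fluct_mul_sub_mul (hcomm : ∀ x y : X, x ≠ y → ∀ a b : A, Commute (ι x a) (ι y b))
    (a b : A) :
    fluct ι ω a * fluct ι ω b - fluct ι ω b * fluct ι ω a =
      ((((Fintype.card X : ℝ) ^ (-(1 : ℝ) / 2) : ℝ) : ℂ) *
        (((Fintype.card X : ℝ) ^ (-(1 : ℝ) / 2) : ℝ) : ℂ)) •
        ∑ x, ι x (a * b - b * a) := by
  rw [fluct_eq_smul, fluct_eq_smul, smul_mul_smul_comm, smul_mul_smul_comm, ← smul_sub,
    sub_algebraMap_mul_sub_algebraMap_sub,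
    sum_mul_sum_sub_sum_mul_sum _ _ _ fun x _ y _ hxy => hcomm x y hxy a b]
  simp only [map_sub, map_mul]

theorem fluct_mul_sub_mul_sub_algebraMap [Nonempty X]
    (hcomm : ∀ x y : X, x ≠ y → ∀ a b : A, Commute (ι x a) (ι y b)) (a b : A) :
    fluct ι ω a * fluct ι ω b - fluct ι ω b * fluct ι ω a - algebraMap ℂ B (ω (a * b - b * a)) =
      (((Fintype.card X : ℝ) ^ (-(1 : ℝ) / 2) : ℝ) : ℂ) • fluct ι ω (a * b - b * a) := by
  have hscale : (((Fintype.card X : ℝ) ^ (-(1 : ℝ) / 2) : ℝ) : ℂ) *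
      (((Fintype.card X : ℝ) ^ (-(1 : ℝ) / 2) : ℝ) : ℂ) * Fintype.card X = 1 := by
    exact_mod_cast Real.rpow_neg_one_half_mul_self (Nat.cast_pos.mpr Fintype.card_pos)
  rw [fluct_mul_sub_mul ι ω hcomm, fluct_eq_smul ι ω (a * b - b * a), smul_smul, smul_sub]
  congr 1
  rw [Algebra.smul_def, ← map_mul, ← mul_assoc, hscale, one_mul]

end Fluctuation

/-- An index `1 ≤ i ≤ n−1` together with the operators `a₁,…,aₙ` is encoded by
splitting the list into a prefix `u` of length `k = i−1`, the distinguished pair `a, b`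
(at positions `i, i+1`) and a suffix `w` of length `m = n−i−1`, with `k + 2 + m = n`. -/
theorem stmt9_general {A B X : Type*} [NormedRing A] [NormedAlgebra ℂ A] [Ring B] [Algebra ℂ B]
    [Fintype X] [Nonempty X] (ι : X → (A →ₐ[ℂ] B))
    (hcomm : ∀ x y : X, x ≠ y → ∀ a b : A, Commute (ι x a) (ι y b))
    (ω : A →ₗ[ℂ] ℂ) (φ : B →ₗ[ℂ] ℂ) (n : ℕ) (C : ℝ) (hC : 0 ≤ C)
    (hφ : ∀ b : Fin (n - 1) → A,
      ‖φ ((List.ofFn fun j => fluct ι ω (b j)).prod)‖ ≤ C * ∏ j, ‖b j‖)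
    (k m : ℕ) (hkm : k + 2 + m = n) (u : Fin k → A) (a b : A) (w : Fin m → A) :
    ‖φ ((List.ofFn fun j => fluct ι ω (u j)).prod *
        (fluct ι ω a * fluct ι ω b - fluct ι ω b * fluct ι ω a
          - algebraMap ℂ B (ω (a * b - b * a))) *
        (List.ofFn fun j => fluct ι ω (w j)).prod)‖ ≤
      2 * (Fintype.card X : ℝ) ^ (-(1 : ℝ) / 2) * C *
        ((∏ j, ‖u j‖) * ‖a‖ * ‖b‖ * ∏ j, ‖w j‖) := by
  have hφL : ∀ L : List A, L.length = n - 1 →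
      ‖φ (L.map (fluct ι ω)).prod‖ ≤ C * (L.map (‖·‖)).prod :=
    List.forall_of_forall_ofFn fun b => by
      simpa [List.map_ofFn, List.prod_ofFn, Function.comp_def] using hφ b
  have hbound := hφL (List.ofFn u ++ (a * b - b * a) :: List.ofFn w) (by
    simp only [List.length_append, List.length_ofFn, List.length_cons]; omega)
  simp only [List.map_append, List.map_cons, List.prod_append, List.prod_cons, List.map_ofFn,
    List.prod_ofFn, Function.comp_def] at hbound
  rw [fluct_mul_sub_mul_sub_algebraMap ι ω hcomm, mul_smul_comm, smul_mul_assoc, map_smul,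
    norm_smul, Complex.norm_real, Real.norm_of_nonneg (by positivity)]
  calc
    _ ≤ (Fintype.card X : ℝ) ^ (-(1 : ℝ) / 2) *
        (C * ((∏ j, ‖u j‖) * ‖a * b - b * a‖ * ∏ j, ‖w j‖)) := by
      gcongr
      simpa only [mul_assoc] using hbound
    _ ≤ (Fintype.card X : ℝ) ^ (-(1 : ℝ) / 2) *
        (C * ((∏ j, ‖u j‖) * (2 * ‖a‖ * ‖b‖) * ∏ j, ‖w j‖)) := by
      gcongr
      exact norm_mul_sub_mul_le a b
    _ = _ := by ring

/-- an index `1 ≤ i ≤ n−1` together with the operators `a₁,…,aₙ` is encoded by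
splitting the list into a prefix `u` of length `k = i−1`, the distinguished pair `a, b`
(at positions `i, i+1`) and a suffix `w` of length `m = n−i−1`, with `k + 2 + m = n`. -/
theorem stmt9 {A B X : Type*} [NormedRing A] [NormedAlgebra ℂ A] [Ring B] [Algebra ℂ B]
    [Fintype X] [Nonempty X] (ι : X → (A →ₐ[ℂ] B))
    (hcomm : ∀ x y : X, x ≠ y → ∀ a b : A, Commute (ι x a) (ι y b))
    (ω : A →ₗ[ℂ] ℂ) (φ : B →ₗ[ℂ] ℂ) (n : ℕ) (hn : 2 ≤ n) (C : ℝ) (hC : 0 ≤ C)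
    (hφ : ∀ b : Fin (n - 1) → A,
      ‖φ ((List.ofFn fun j => fluct ι ω (b j)).prod)‖ ≤ C * ∏ j, ‖b j‖)
    (k m : ℕ) (hkm : k + 2 + m = n) (u : Fin k → A) (a b : A) (w : Fin m → A) :
    ‖φ ((List.ofFn fun j => fluct ι ω (u j)).prod *
        (fluct ι ω a * fluct ι ω b - fluct ι ω b * fluct ι ω a
          - algebraMap ℂ B (ω (a * b - b * a))) *
        (List.ofFn fun j => fluct ι ω (w j)).prod)‖ ≤
      2 * (Fintype.card X : ℝ) ^ (-(1 : ℝ) / 2) * C *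
        ((∏ j, ‖u j‖) * ‖a‖ * ‖b‖ * ∏ j, ‖w j‖) :=
  stmt9_general ι hcomm ω φ n C hC hφ k m hkm u a b w
end

section
/- Let B be a unital normed ℂ-algebra with submultiplicative norm and let φ : B → ℂ be a linear functional with |φ(b)| ≤ ‖b‖ for all b ∈ B. Let k ≥ 2, let A₁,…,A_k ∈ B, let G₀ ≥ 0 and δ₁,…,δ_{k−1} ∈ ℝ, and suppose that for each l = 1,…,k−1: |φ(A_l · A_{l+1}⋯A_k) − φ(A_l)·φ(A_{l+1}⋯A_k)| ≤ G₀ · ‖A_l‖ · ‖A_{l+1}⋯A_k‖ · e^{−δ_l}. Then |φ(A₁⋯A_k) − φ(A₁)φ(A₂)⋯φ(A_k)| ≤ G₀ · ‖A₁‖⋯‖A_k‖ · ∑_{l=1}^{k−1} e^{−δ_l}. -/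
open scoped BigOperators

/-- The (noncommutative, ordered) product `A_l · A_{l+1} ⋯ A_{k-1}` of the tail of a
family `A : Fin k → B` starting at position `l` (0-based). -/
noncomputable def prodFrom {B : Type*} [Ring B] {k : ℕ} (A : Fin k → B) (l : ℕ) : B :=
  (List.ofFn (fun j : Fin (k - l) => A ⟨l + j.1, by have h := j.isLt; omega⟩)).prod

/-!
Peel off one factor at a time. Writing `P = A_{l+1} ⋯ A_k` and `p = φ(A_{l+1}) ⋯ φ(A_k)`,
`φ(A_l P) - φ(A_l) p = (φ(A_l P) - φ(A_l) φ(P)) + φ(A_l) (φ(P) - p)`: the first term is the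
clustering bound at `l`, and in the second `|φ(A_l)| ≤ ‖A_l‖` multiplies the error at `l + 1`.
Downward induction on `l` accumulates one weight `e^{-δ_l}` per step.
-/

section prodFrom

variable {B : Type*} {k : ℕ}

lemma prodFrom_of_le [Ring B] (A : Fin k → B) {l : ℕ} (h : k ≤ l) : prodFrom A l = 1 := by
  rw [prodFrom, List.ofFn_congr (show k - l = 0 by omega)]
  simp

lemma prodFrom_of_lt [Ring B] (A : Fin k → B) {l : ℕ} (h : l < k) :
    prodFrom A l = A ⟨l, h⟩ * prodFrom A (l + 1) := by
  rw [prodFrom, List.ofFn_congr (show k - l = k - (l + 1) + 1 by omega), List.ofFn_succ,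
    List.prod_cons]
  congr 3
  funext i
  congr 2
  simp only [Fin.val_cast, Fin.val_succ]
  omega

lemma prodFrom_zero [CommRing B] (A : Fin k → B) : prodFrom A 0 = ∏ i, A i := by
  rw [prodFrom, List.ofFn_congr (Nat.sub_zero k), List.prod_ofFn]
  simp

lemma norm_prodFrom_le [NormedRing B] (A : Fin k → B) {l : ℕ} (h : l < k) :
    ‖prodFrom A l‖ ≤ prodFrom (‖A ·‖) l := by
  refine (List.norm_prod_le' (by rw [Ne, List.ofFn_eq_nil_iff]; omega)).trans_eq ?_
  rw [List.map_ofFn]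
  rfl

end prodFrom

section Cluster

variable {B R : Type*} [NormedRing B] [NormedRing R] {φ : B → R}

lemma norm_map_mul_sub_mul_le (hφ : ∀ b, ‖φ b‖ ≤ ‖b‖) (a P : B) (p : R) :
    ‖φ (a * P) - φ a * p‖ ≤ ‖φ (a * P) - φ a * φ P‖ + ‖a‖ * ‖φ P - p‖ :=
  calc ‖φ (a * P) - φ a * p‖ = ‖(φ (a * P) - φ a * φ P) + φ a * (φ P - p)‖ := by noncomm_ring
    _ ≤ ‖φ (a * P) - φ a * φ P‖ + ‖φ a‖ * ‖φ P - p‖ :=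
      (norm_add_le _ _).trans (add_le_add_right (norm_mul_le _ _) _)
    _ ≤ _ := by gcongr; exact hφ a

variable {k : ℕ} {A : Fin k → B} {G₀ : ℝ} {ε : ℕ → ℝ}

lemma norm_map_prodFrom_sub_le (hφ : ∀ b, ‖φ b‖ ≤ ‖b‖) (hG₀ : 0 ≤ G₀) (hε : ∀ l, 0 ≤ ε l)
    (hcl : ∀ l (hl : l + 1 < k),
      ‖φ (A ⟨l, by omega⟩ * prodFrom A (l + 1))
          - φ (A ⟨l, by omega⟩) * φ (prodFrom A (l + 1))‖ ≤
        G₀ * ‖A ⟨l, by omega⟩‖ * ‖prodFrom A (l + 1)‖ * ε l)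
    {l : ℕ} (hl : l < k) :
    ‖φ (prodFrom A l) - prodFrom (φ ∘ A) l‖ ≤
      G₀ * prodFrom (‖A ·‖) l * ∑ j ∈ Finset.Ico l (k - 1), ε j := by
  induction (show l ≤ k - 1 by omega) using Nat.decreasingInduction with
  | self =>
    rw [prodFrom_of_lt A (by omega), prodFrom_of_lt (φ ∘ A) (by omega),
      prodFrom_of_le A (by omega), prodFrom_of_le (φ ∘ A) (by omega)]
    simp
  | of_succ l hlk ih =>
    have hP := norm_prodFrom_le A (show l + 1 < k by omega)
    rw [prodFrom_of_lt A hl, prodFrom_of_lt (φ ∘ A) hl, prodFrom_of_lt (‖A ·‖) hl,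
      Finset.sum_eq_sum_Ico_succ_bot hlk]
    calc _ ≤ G₀ * ‖A ⟨l, hl⟩‖ * ‖prodFrom A (l + 1)‖ * ε l
            + ‖A ⟨l, hl⟩‖ * (G₀ * prodFrom (‖A ·‖) (l + 1)
              * ∑ j ∈ Finset.Ico (l + 1) (k - 1), ε j) :=
          (norm_map_mul_sub_mul_le hφ _ _ _).trans
            (add_le_add (hcl l (by omega)) (by gcongr; exact ih (by omega)))
      _ ≤ G₀ * ‖A ⟨l, hl⟩‖ * prodFrom (‖A ·‖) (l + 1) * ε l
            + ‖A ⟨l, hl⟩‖ * (G₀ * prodFrom (‖A ·‖) (l + 1)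
              * ∑ j ∈ Finset.Ico (l + 1) (k - 1), ε j) := by
          gcongr
          exact hε l
      _ = _ := by ring

end Cluster

theorem stmt10 {B : Type*} [NormedRing B] [NormedAlgebra ℂ B]
    (φ : B →ₗ[ℂ] ℂ) (hφ : ∀ b : B, ‖φ b‖ ≤ ‖b‖)
    (k : ℕ) (hk : 2 ≤ k) (A : Fin k → B) (G₀ : ℝ) (hG₀ : 0 ≤ G₀) (δ : ℕ → ℝ)
    (hcl : ∀ (l : ℕ) (hl : l + 2 ≤ k),
      ‖φ (A ⟨l, by omega⟩ * prodFrom A (l + 1))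
          - φ (A ⟨l, by omega⟩) * φ (prodFrom A (l + 1))‖ ≤
        G₀ * ‖A ⟨l, by omega⟩‖ * ‖prodFrom A (l + 1)‖ * Real.exp (-δ l)) :
    ‖φ (prodFrom A 0) - ∏ i, φ (A i)‖ ≤
      G₀ * (∏ i, ‖A i‖) * ∑ l ∈ Finset.range (k - 1), Real.exp (-δ l) := by
  have h := norm_map_prodFrom_sub_le hφ hG₀ (fun l => (Real.exp_pos (-δ l)).le)
    (fun l hl => hcl l hl) (show 0 < k by omega)
  rwa [prodFrom_zero, prodFrom_zero, ← Finset.range_eq_Ico] at h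
end
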